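/- arXiv:1809.10051 — 2 statements merged into one kernel-verified Lean document; each statement's English description precedes it below -/
import Mathlib

section
/- In a complete Boolean algebra with the topology O_{λ_ls} (whose closed sets are the λ_ls-sequentially closed sets), a set F is closed if and only if F is upward-closed and for every decreasing sequence ⟨x_n⟩ in F, ⋀_n x_n ∈ F. -/
open Filter

section CompleteLattice

variable {α : Type*} [CompleteLattice α]

/-- The λ_ls-sequentially closed sets: `λ_ls(x)` is the set of upper bounds of `limsup x`. -/
def IsLimsupClosed (F : Set α) : Prop :=
  ∀ x : ℕ → α, (∀ n, x n ∈ F) → ∀ b, limsup x atTop ≤ b → b ∈ F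

theorem antitone_iSup_ge (x : ℕ → α) : Antitone fun n => ⨆ i ≥ n, x i :=
  fun _ _ hmn => biSup_mono fun _ hn => hmn.trans hn

theorem Antitone.limsup_eq_iInf {x : ℕ → α} (hx : Antitone x) :
    limsup x atTop = ⨅ n, x n := by
  rw [limsup_eq_iInf_iSup_of_nat]
  refine iInf_congr fun n => le_antisymm ?_ ?_
  · exact iSup₂_le fun _ hi => hx hi
  · exact le_iSup₂_of_le n le_rfl le_rfl

theorem isLimsupClosed_iff {F : Set α} :
    IsLimsupClosed F ↔ IsUpperSet F ∧ ∀ x : ℕ → α, (∀ n, x n ∈ F) → Antitone x → ⨅ n, x n ∈ F := by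
  refine ⟨fun h => ⟨fun a b hab ha => ?_, fun x hx hanti => ?_⟩, fun ⟨hup, hinf⟩ x hx b hb => ?_⟩
  · exact h (fun _ => a) (fun _ => ha) b (by rwa [limsup_const])
  · exact h x hx _ hanti.limsup_eq_iInf.le
  · -- the tails `⨆ i ≥ k, x i` dominate `x k`, so lie in `F`, and decrease to `limsup x`
    have htail : ∀ k, ⨆ i ≥ k, x i ∈ F := fun k => hup (le_iSup₂_of_le k le_rfl le_rfl) (hx k)
    rw [limsup_eq_iInf_iSup_of_nat] at hb
    exact hup hb (hinf _ htail (antitone_iSup_ge x))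

end CompleteLattice

/-- F is λ_ls-sequentially closed iff F is upward-closed and closed under
infima of decreasing sequences. -/
theorem stmt_10 {B : Type*} [CompleteBooleanAlgebra B] (F : Set B) :
    (∀ x : ℕ → B, (∀ n, x n ∈ F) →
        ∀ b : B, (⨅ k, ⨆ n, ⨆ _ : n ≥ k, x n) ≤ b → b ∈ F) ↔
    ((∀ a ∈ F, ∀ b : B, a ≤ b → b ∈ F) ∧
      (∀ x : ℕ → B, (∀ n, x n ∈ F) → Antitone x → (⨅ n, x n) ∈ F)) := by
  simp only [← limsup_eq_iInf_iSup_of_nat]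
  have hupper : IsUpperSet F ↔ ∀ a ∈ F, ∀ b : B, a ≤ b → b ∈ F :=
    ⟨fun h _ ha _ hab => h hab ha, fun h _ _ hab ha => h _ ha _ hab⟩
  rw [← hupper]
  exact isLimsupClosed_iff
end

section
/- If B is a nontrivial complete Boolean algebra, then the topology O_{λ_li} is not the indiscrete topology; in fact O_{λ_li} is T₀. Consequently, if a sequence x has 1 ∈ lim_{O_{λ_li}}(x) and 0 appears as every term of x, then every nonempty open set of O_{λ_li} equals B, a contradiction; hence 1 ∉ lim_{O_{λ_li}}(⟨0,0,...⟩). -/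
/-!
For every `a`, the set `{c | ¬ c ≤ a}` is open in `O_{λ_li}`, because the liminf of a sequence
lying in `Iic a` stays in `Iic a`. These open sets separate `x` from `y` whenever `¬ y ≤ x`, so
`x ⤳ y` forces `y ≤ x`. Antisymmetry of `≤` then gives T₀, and convergence of the constant
sequence `⊥` to `⊤` (automatic in the indiscrete topology) would force `⊤ ≤ ⊥`.
-/

open TopologicalSpace

def rightTop (B : Type*) [CompleteBooleanAlgebra B] : TopologicalSpace B :=
  generateFrom {U : Set B | ∀ x : ℕ → B, (∀ n, x n ∉ U) →
    ∀ b : B, b ≤ (⨆ k, ⨅ n, ⨅ _ : n ≥ k, x n) → b ∉ U}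

section

variable {B : Type*} [CompleteBooleanAlgebra B]

attribute [local instance] rightTop

lemma rightTop_isOpen_setOf_not_le (a : B) : IsOpen {c : B | ¬ c ≤ a} := by
  apply isOpen_generateFrom_of_mem
  intro x hx b hb
  simp only [Set.mem_ofPred_eq, not_not] at hx ⊢
  exact hb.trans (iSup_le fun k => (iInf₂_le k le_rfl).trans (hx k))

lemma rightTop_le_of_specializes {x y : B} (h : x ⤳ y) : y ≤ x := by
  by_contra hyx
  exact (specializes_iff_forall_open.mp h _ (rightTop_isOpen_setOf_not_le x) hyx) le_rfl

lemma rightTop_t0Space : T0Space B :=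
  (t0Space_iff_inseparable B).mpr fun _ _ hxy =>
    le_antisymm (rightTop_le_of_specializes hxy.specializes')
      (rightTop_le_of_specializes hxy.specializes)

lemma rightTop_le_of_tendsto_const {α : Type*} {l : Filter α} [l.NeBot] {a b : B}
    (h : Filter.Tendsto (fun _ => a) l (nhds b)) : b ≤ a := by
  rw [Filter.Tendsto, Filter.map_const, ← specializes_iff_pure] at h
  exact rightTop_le_of_specializes h

end

/-- If B is nontrivial then O_{λ_li} is not indiscrete, is T₀, and the constant
sequence 0 does not converge to 1 in it. -/
theorem stmt_14 {B : Type*} [CompleteBooleanAlgebra B] (h : (⊥ : B) ≠ ⊤) :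
    rightTop B ≠ (⊤ : TopologicalSpace B) ∧ @T0Space B (rightTop B) ∧
    ¬ Filter.Tendsto (fun _ : ℕ => (⊥ : B)) Filter.atTop
        (@nhds B (rightTop B) ⊤) := by
  have not_tendsto : ¬ Filter.Tendsto (fun _ : ℕ => (⊥ : B)) Filter.atTop
      (@nhds B (rightTop B) ⊤) := fun ht =>
    h (le_bot_iff.mp (rightTop_le_of_tendsto_const ht)).symm
  refine ⟨fun htop => not_tendsto ?_, rightTop_t0Space, not_tendsto⟩
  rw [htop, nhds_top]
  exact Filter.tendsto_top
end
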